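/- arXiv:1604.04866 — 12 statements merged into one kernel-verified Lean document; each statement's English description precedes it below -/
import Mathlib

section
/- Let M be an ideal of D and I an ideal of R. There exists a filter F on E with I ⊆ M_F if and only if the family Z_M(I) = {f^{-1}(M) : f ∈ I} of subsets of E has the finite intersection property. -/
theorem stmt4 {D : Type*} [CommRing D] [IsDomain D] {E : Set D}
    (R : Subring (↥E → D)) (hconst : ∀ d : D, (fun _ : ↥E => d) ∈ R)
    (M : Ideal D) (I : Ideal R) :
    (∃ F : Filter ↥E, F.NeBot ∧
        ∀ f ∈ I, {e : ↥E | (f : ↥E → D) e ∈ M} ∈ F) ↔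
      (∀ t : Set (Set ↥E),
        t ⊆ {A : Set ↥E | ∃ f ∈ I, A = {e : ↥E | (f : ↥E → D) e ∈ M}} →
        t.Finite → (⋂₀ t).Nonempty) := by
  constructor
  · rintro ⟨F, hF, h⟩ t hts htf
    haveI := hF
    have hmem : ⋂₀ t ∈ F := (Filter.sInter_mem htf).mpr ?_
    · exact Filter.nonempty_of_mem hmem
    · intro A hA
      obtain ⟨f, hf, rfl⟩ := hts hA
      exact h f hf
  · intro h
    refine ⟨Filter.generate {A : Set ↥E | ∃ f ∈ I, A = {e : ↥E | (f : ↥E → D) e ∈ M}},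
      Filter.generate_neBot_iff.mpr h, fun f hf => Filter.mem_generate_of_mem ⟨f, hf, rfl⟩⟩
end

section
/- Let M be a maximal ideal of a domain D such that the residue field D/M is not algebraically closed. Then for every ideal I of a ring of functions R from E to D, the set Z_M(I) = {f^{-1}(M) : f ∈ I} is closed under finite intersections: for all f, g ∈ I there exists h ∈ I with h^{-1}(M) = f^{-1}(M) ∩ g^{-1}(M). -/
/-!
Since `D ⧸ M` is not algebraically closed, it carries a polynomial `p` of positive degree `n`
without roots, and then the homogenization `P(X, Y) = ∑ pᵢ Xⁱ Yⁿ⁻ⁱ` vanishes over `D ⧸ M` only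
at `(0, 0)`. Lifting the coefficients of `P` to constant functions in `R`, the element
`h = P(f, g)` lies in the ideal generated by `f` and `g` (as `P` is homogeneous of positive
degree), and `h e ∈ M` exactly when `f e ∈ M` and `g e ∈ M`.
-/

namespace MvPolynomial

lemma IsHomogeneous.mem_idealOfVars {σ R : Type*} [CommSemiring R] {φ : MvPolynomial σ R} {n : ℕ}
    (hφ : φ.IsHomogeneous n) (hn : n ≠ 0) : φ ∈ idealOfVars σ R := by
  rw [← pow_one (idealOfVars σ R), mem_pow_idealOfVars_iff]
  intro m hm
  rw [Finsupp.degree_eq_weight_one]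
  exact (Nat.one_le_iff_ne_zero.mpr hn).trans_eq (hφ (mem_support_iff.mp hm)).symm

lemma IsHomogeneous.eval₂_mem {σ R S : Type*} [CommSemiring R] [CommSemiring S]
    {φ : MvPolynomial σ R} {n : ℕ} (hφ : φ.IsHomogeneous n) (hn : n ≠ 0) (f : R →+* S)
    {I : Ideal S} {x : σ → S} (hx : ∀ i, x i ∈ I) : MvPolynomial.eval₂ f x φ ∈ I := by
  have : (idealOfVars σ R).map (eval₂Hom f x) ≤ I := by
    rw [Ideal.map_span, Ideal.span_le, ← Set.range_comp]
    rintro _ ⟨i, rfl⟩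
    simpa using hx i
  exact this (Ideal.mem_map_of_mem _ (hφ.mem_idealOfVars hn))

end MvPolynomial

namespace Polynomial

lemma eval_homogenize_of_eq_zero {R : Type*} [CommSemiring R] (p : R[X]) (n : ℕ) {x : Fin 2 → R}
    (hx : x 1 = 0) : MvPolynomial.eval x (p.homogenize n) = p.coeff n * x 0 ^ n := by
  rw [homogenize, MvPolynomial.eval_sum, Finset.sum_eq_single (n, 0)]
  · simp [MvPolynomial.eval_monomial]
  · rintro ⟨k, l⟩ hkl hne
    have : l ≠ 0 := by
      rintro rfl
      simp_all
    simp [MvPolynomial.eval_monomial, hx, this]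
  · simp

lemma eval_homogenize_natDegree_eq_zero_iff {K : Type*} [Field K] {p : K[X]}
    (hp : 0 < p.natDegree) (hroot : ∀ a, ¬ p.IsRoot a) (x : Fin 2 → K) :
    MvPolynomial.eval x (p.homogenize p.natDegree) = 0 ↔ x = 0 := by
  refine ⟨fun h => ?_, by rintro rfl; rw [eval_homogenize_of_eq_zero p _ rfl]; simp [hp.ne']⟩
  by_cases hx : x 1 = 0
  · rw [eval_homogenize_of_eq_zero p _ hx, coeff_natDegree, mul_eq_zero,
      leadingCoeff_eq_zero, pow_eq_zero_iff hp.ne'] at h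
    have hp0 : p ≠ 0 := ne_zero_of_natDegree_gt hp
    ext i; fin_cases i <;> simp_all
  · rw [eval_homogenize le_rfl x hx, mul_eq_zero, pow_eq_zero_iff hp.ne'] at h
    exact absurd (h.resolve_right hx) (hroot _)

lemma map_eval₂_homogenize {R S K : Type*} [CommSemiring R] [CommSemiring S] [CommSemiring K]
    (k : S →+* K) (f : R →+* S) (x : Fin 2 → S) (q : R[X]) (n : ℕ) :
    k (MvPolynomial.eval₂ f x (q.homogenize n)) =
      MvPolynomial.eval (k ∘ x) ((q.map (k.comp f)).homogenize n) := by
  rw [MvPolynomial.eval₂_comp_left, homogenize_map, MvPolynomial.eval_map]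

lemma exists_natDegree_pos_forall_not_isRoot {K : Type*} [Field K] (h : ¬ IsAlgClosed K) :
    ∃ p : K[X], 0 < p.natDegree ∧ ∀ a, ¬ p.IsRoot a := by
  by_contra! H
  exact h (IsAlgClosed.of_exists_root _ fun p _ hirr => H p hirr.natDegree_pos)

end Polynomial

open Polynomial in
theorem stmt5_general {D : Type*} [CommRing D] {E : Set D}
    (R : Subring (↥E → D)) (hconst : ∀ d : D, (fun _ : ↥E => d) ∈ R)
    (M : Ideal D) [hM : M.IsMaximal] (halg : ¬ @IsAlgClosed (D ⧸ M) (Ideal.Quotient.field M)) :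
    ∀ I : Ideal R, ∀ f ∈ I, ∀ g ∈ I, ∃ h ∈ I,
      {e : ↥E | (h : ↥E → D) e ∈ M} =
        {e : ↥E | (f : ↥E → D) e ∈ M} ∩ {e : ↥E | (g : ↥E → D) e ∈ M} := by
  intro I f hf g hg
  let := Ideal.Quotient.field M
  obtain ⟨p, hp, hroot⟩ := exists_natDegree_pos_forall_not_isRoot halg
  obtain ⟨q, rfl⟩ := map_surjective _ Ideal.Quotient.mk_surjective p
  let const : D →+* R := (Pi.constRingHom E D).codRestrict R hconst
  refine ⟨MvPolynomial.eval₂ const ![f, g] (q.homogenize (q.map (Ideal.Quotient.mk M)).natDegree),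
    (isHomogeneous_homogenize q).eval₂_mem hp.ne' const (Fin.forall_fin_two.mpr ⟨hf, hg⟩), ?_⟩
  ext e
  let ψ : R →+* D ⧸ M := (Ideal.Quotient.mk M).comp ((Pi.evalRingHom _ e).comp R.subtype)
  simp only [Set.mem_ofPred_eq, Set.mem_inter_iff, ← Ideal.Quotient.eq_zero_iff_mem]
  change ψ _ = 0 ↔ ψ f = 0 ∧ ψ g = 0
  rw [map_eval₂_homogenize, show ψ.comp const = Ideal.Quotient.mk M from rfl,
    eval_homogenize_natDegree_eq_zero_iff hp hroot]
  simp [funext_iff, Fin.forall_fin_two]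

theorem stmt5 {D : Type*} [CommRing D] [IsDomain D] {E : Set D}
    (R : Subring (↥E → D)) (hconst : ∀ d : D, (fun _ : ↥E => d) ∈ R)
    (M : Ideal D) [hM : M.IsMaximal] (halg : ¬ @IsAlgClosed (D ⧸ M) (Ideal.Quotient.field M)) :
    ∀ I : Ideal R, ∀ f ∈ I, ∀ g ∈ I, ∃ h ∈ I,
      {e : ↥E | (h : ↥E → D) e ∈ M} =
        {e : ↥E | (f : ↥E → D) e ∈ M} ∩ {e : ↥E | (g : ↥E → D) e ∈ M} :=
  stmt5_general R hconst M (hM := hM) halg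
end

section
/- Let M be a maximal ideal of a domain D and R a ring of functions from E to D such that every f ∈ R takes values in only finitely many residue classes mod M. Then for every ideal I of R, the set Z_M(I) = {f^{-1}(M) : f ∈ I} is closed under finite intersections: for all f, g ∈ I there exists h ∈ I with h^{-1}(M) = f^{-1}(M) ∩ g^{-1}(M). -/
/-!
Let `χ ∈ R` be congruent mod `M` to the indicator function of `f⁻¹(M)`; then `h = f + g χ ∈ I`
vanishes mod `M` exactly where `f` and `g` both do. Such a `χ` exists because `f` takes only
finitely many nonzero residues `a`: take `χ = ∏ₐ (1 - cₐ f)` with `cₐ` a constant lifting `a⁻¹`.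
-/

theorem Finset.prod_erase_zero_one_sub_inv_mul {K : Type*} [Field K] [DecidableEq K]
    {S : Finset K} {x : K} (hx : x ∈ S) :
    ∏ a ∈ S.erase 0, (1 - a⁻¹ * x) = if x = 0 then 1 else 0 := by
  split_ifs with h
  · simp [h]
  · exact Finset.prod_eq_zero (Finset.mem_erase.2 ⟨h, hx⟩) (by simp [h])

section PointwiseResidues

variable {R K E : Type*} [CommRing R] [Field K] (φ : E → R →+* K)

theorem exists_eval_eq_ite_eval_eq_zero [DecidableEq K]
    (hconst : ∀ k : K, ∃ r : R, ∀ e, φ e r = k) {f : R} (hfin : (Set.range fun e => φ e f).Finite) :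
    ∃ χ : R, ∀ e, φ e χ = if φ e f = 0 then 1 else 0 := by
  choose c hc using hconst
  refine ⟨∏ a ∈ hfin.toFinset.erase 0, (1 - c a⁻¹ * f), fun e => ?_⟩
  simp only [map_prod, map_sub, map_one, map_mul, hc]
  exact Finset.prod_erase_zero_one_sub_inv_mul (hfin.mem_toFinset.2 ⟨e, rfl⟩)

theorem Ideal.exists_mem_eval_eq_zero_iff (hconst : ∀ k : K, ∃ r : R, ∀ e, φ e r = k)
    {I : Ideal R} {f g : R} (hf : f ∈ I) (hg : g ∈ I)
    (hfin : (Set.range fun e => φ e f).Finite) :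
    ∃ h ∈ I, ∀ e, φ e h = 0 ↔ φ e f = 0 ∧ φ e g = 0 := by
  classical
  obtain ⟨χ, hχ⟩ := exists_eval_eq_ite_eval_eq_zero φ hconst hfin
  refine ⟨f + g * χ, I.add_mem hf (I.mul_mem_right χ hg), fun e => ?_⟩
  by_cases hfe : φ e f = 0 <;> simp [hχ, hfe]

end PointwiseResidues

theorem stmt8_general {D : Type*} [CommRing D] {E : Set D}
    (R : Subring (↥E → D)) (hconst : ∀ d : D, (fun _ : ↥E => d) ∈ R)
    (M : Ideal D) (hM : M.IsMaximal)
    (hfin : ∀ f : R,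
      (Set.range fun e : ↥E => Ideal.Quotient.mk M ((f : ↥E → D) e)).Finite) :
    ∀ I : Ideal R, ∀ f ∈ I, ∀ g ∈ I, ∃ h ∈ I,
      {e : ↥E | (h : ↥E → D) e ∈ M} =
        {e : ↥E | (f : ↥E → D) e ∈ M} ∩ {e : ↥E | (g : ↥E → D) e ∈ M} := by
  intro I f hf g hg
  let := Ideal.Quotient.field M
  let φ : ↥E → R →+* D ⧸ M := fun e =>
    (Ideal.Quotient.mk M).comp ((Pi.evalRingHom _ e).comp R.subtype)
  have hconst' : ∀ k : D ⧸ M, ∃ r : R, ∀ e, φ e r = k := fun k => by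
    obtain ⟨d, rfl⟩ := Ideal.Quotient.mk_surjective k
    exact ⟨⟨_, hconst d⟩, fun _ => rfl⟩
  obtain ⟨h, hI, hh⟩ := Ideal.exists_mem_eval_eq_zero_iff φ hconst' hf hg (hfin f)
  refine ⟨h, hI, Set.ext fun e => ?_⟩
  simpa [φ, Ideal.Quotient.eq_zero_iff_mem] using hh e

theorem stmt8 {D : Type*} [CommRing D] [IsDomain D] {E : Set D}
    (R : Subring (↥E → D)) (hconst : ∀ d : D, (fun _ : ↥E => d) ∈ R)
    (M : Ideal D) (hM : M.IsMaximal)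
    (hfin : ∀ f : R,
      (Set.range fun e : ↥E => Ideal.Quotient.mk M ((f : ↥E → D) e)).Finite) :
    ∀ I : Ideal R, ∀ f ∈ I, ∀ g ∈ I, ∃ h ∈ I,
      {e : ↥E | (h : ↥E → D) e ∈ M} =
        {e : ↥E | (f : ↥E → D) e ∈ M} ∩ {e : ↥E | (g : ↥E → D) e ∈ M} :=
  stmt8_general R hconst M hM hfin
end

section
/- Let M be a maximal ideal of a domain D and I an ideal of a ring of functions R from E to D. Assume that either D/M is not algebraically closed or each function in R takes values in only finitely many residue classes mod M. Then I is contained in an ideal of the form M_F for some filter F on E if and only if I contains no M-unit-valued function (a function f with f(e) + M a unit in D/M for every e ∈ E). -/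
/-!
For `f ∈ I` let `Z f = {e | f e ∈ M}`. If `I` has no `M`-unit-valued element, every `Z f` is
nonempty, so it suffices that these sets are downward directed: then they generate a proper
filter. Given `f, g ∈ I` we need `h ∈ I` with `Z h ⊆ Z f ∩ Z g`, working in the field `D ⧸ M`.
If `D ⧸ M` has a polynomial `p` of degree `n ≥ 1` without roots, its homogenization
`h = ∑ pᵢ fⁱ gⁿ⁻ⁱ` vanishes mod `M` only where `f` and `g` both do. If `f` takes finitely many
values mod `M`, then `1 - ∏_{c ≠ 0} (1 - c⁻¹ f)` is `0` on `Z f` and `1` elsewhere; with the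
same for `g`, take `h = f + g - f g`.
-/

open Polynomial Finset Filter

theorem Polynomial.exists_natDegree_pos_forall_not_isRoot_s10 {K : Type*} [Field K]
    (hK : ¬IsAlgClosed K) : ∃ p : K[X], 0 < p.natDegree ∧ ∀ z, ¬p.IsRoot z := by
  contrapose! hK
  exact IsAlgClosed.of_exists_root K fun p _ hirr => hK p hirr.natDegree_pos

theorem Polynomial.eq_zero_and_eq_zero_of_sum_coeff_mul_pow_mul_pow_eq_zero {K : Type*}
    [Field K] {p : K[X]} (hp : ∀ z, ¬p.IsRoot z) {x y : K}
    (h : ∑ i ∈ range (p.natDegree + 1), p.coeff i * x ^ i * y ^ (p.natDegree - i) = 0) :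
    x = 0 ∧ y = 0 := by
  set n := p.natDegree
  have hy : y = 0 := by
    by_contra hy
    apply hp (x / y)
    have : y ^ n * p.eval (x / y) = 0 := by
      rw [eval_eq_sum_range, mul_sum, ← h]
      refine sum_congr rfl fun i hi => ?_
      have hyn : y ^ n = y ^ (n - i) * y ^ i := by
        rw [← pow_add, Nat.sub_add_cancel (Nat.lt_succ_iff.mp (mem_range.mp hi))]
      rw [hyn, div_pow]
      field_simp
    exact (mul_eq_zero.mp this).resolve_left (pow_ne_zero _ hy)
  have hp0 : p ≠ 0 := by rintro rfl; exact hp 0 (by simp)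
  rw [sum_eq_single_of_mem n (self_mem_range_succ n) fun i hi hin => by
    rw [hy, zero_pow (Nat.sub_ne_zero_of_lt
      (lt_of_le_of_ne (Nat.lt_succ_iff.mp (mem_range.mp hi)) hin)), mul_zero],
    Nat.sub_self, pow_zero, mul_one] at h
  exact ⟨eq_zero_of_pow_eq_zero
    ((mul_eq_zero.mp h).resolve_left (leadingCoeff_ne_zero.mpr hp0)), hy⟩

theorem Ideal.one_sub_prod_one_sub_mem {A ι : Type*} [CommRing A] (I : Ideal A) (s : Finset ι)
    {u : ι → A} (hu : ∀ i ∈ s, u i ∈ I) : 1 - ∏ i ∈ s, (1 - u i) ∈ I := by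
  rw [← Ideal.Quotient.eq_zero_iff_mem, map_sub, map_one, map_prod, sub_eq_zero, eq_comm]
  exact prod_eq_one fun i hi => by
    rw [map_sub, map_one, Ideal.Quotient.eq_zero_iff_mem.mpr (hu i hi), sub_zero]

theorem Filter.exists_neBot_forall_mem_of_exists_subset_inter {α X : Type*} {s : Set α}
    (Z : α → Set X) (hs : s.Nonempty) (hne : ∀ a ∈ s, (Z a).Nonempty)
    (hdir : ∀ a ∈ s, ∀ b ∈ s, ∃ c ∈ s, Z c ⊆ Z a ∩ Z b) :
    ∃ F : Filter X, F.NeBot ∧ ∀ a ∈ s, Z a ∈ F := by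
  have : Nonempty s := hs.to_subtype
  refine ⟨⨅ a : s, 𝓟 (Z a), iInf_neBot_of_directed' ?_ fun a => ?_,
    fun a ha => mem_iInf_of_mem ⟨a, ha⟩ (mem_principal_self _)⟩
  · rintro ⟨a, ha⟩ ⟨b, hb⟩
    obtain ⟨c, hc, hcab⟩ := hdir a ha b hb
    exact ⟨⟨c, hc⟩, principal_mono.mpr (hcab.trans Set.inter_subset_left),
      principal_mono.mpr (hcab.trans Set.inter_subset_right)⟩
  · exact principal_neBot_iff.mpr (hne a a.2)

section RingOfFunctions

variable {A K X : Type*} [CommRing A] [Field K] (φ : X → A →+* K)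
  (hconst : ∀ k : K, ∃ a : A, ∀ x, φ x a = k)
include hconst

theorem exists_mem_forall_eq_zero_of_not_isAlgClosed (hK : ¬IsAlgClosed K) (I : Ideal A)
    {f g : A} (hf : f ∈ I) (hg : g ∈ I) :
    ∃ h ∈ I, ∀ x, φ x h = 0 → φ x f = 0 ∧ φ x g = 0 := by
  obtain ⟨p, hdeg, hroot⟩ := exists_natDegree_pos_forall_not_isRoot_s10 hK
  choose c hc using fun i => hconst (p.coeff i)
  set n := p.natDegree
  refine ⟨∑ i ∈ range (n + 1), c i * f ^ i * g ^ (n - i), I.sum_mem fun i _ => ?_,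
    fun x hx => eq_zero_and_eq_zero_of_sum_coeff_mul_pow_mul_pow_eq_zero hroot ?_⟩
  · rcases Nat.eq_zero_or_pos i with rfl | hi
    · exact I.mul_mem_left _ (I.pow_mem_of_mem hg _ (by omega))
    · exact I.mul_mem_right _ (I.mul_mem_left _ (I.pow_mem_of_mem hf _ hi))
  · simpa [hc] using hx

open Classical in
theorem exists_mem_forall_eq_ite_of_finite_range (I : Ideal A) {f : A} (hf : f ∈ I)
    (hfin : (Set.range fun x => φ x f).Finite) :
    ∃ f' ∈ I, ∀ x, φ x f' = if φ x f = 0 then 0 else 1 := by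
  choose inv hinv using fun k : K => hconst k⁻¹
  set S := hfin.toFinset.erase 0
  refine ⟨1 - ∏ k ∈ S, (1 - inv k * f),
    I.one_sub_prod_one_sub_mem S fun k _ => I.mul_mem_left _ hf, fun x => ?_⟩
  simp only [map_sub, map_one, map_prod, map_mul, hinv]
  split_ifs with hx
  · simp [hx]
  · have hxS : φ x f ∈ S := by simp [S, hx]
    rw [prod_eq_zero hxS (by rw [inv_mul_cancel₀ hx, sub_self]), sub_zero]

theorem exists_mem_forall_eq_zero_of_finite_range
    (hfin : ∀ a : A, (Set.range fun x => φ x a).Finite) (I : Ideal A) {f g : A}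
    (hf : f ∈ I) (hg : g ∈ I) :
    ∃ h ∈ I, ∀ x, φ x h = 0 → φ x f = 0 ∧ φ x g = 0 := by
  obtain ⟨f', hf'I, hf'⟩ := exists_mem_forall_eq_ite_of_finite_range φ hconst I hf (hfin f)
  obtain ⟨g', hg'I, hg'⟩ := exists_mem_forall_eq_ite_of_finite_range φ hconst I hg (hfin g)
  refine ⟨f' + g' - f' * g', sub_mem (add_mem hf'I hg'I) (I.mul_mem_left _ hg'I),
    fun x hx => ?_⟩
  rw [map_sub, map_add, map_mul, hf' x, hg' x] at hx
  split_ifs at hx <;> simp_all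

theorem exists_neBot_forall_setOf_eq_zero_mem_iff
    (hK : ¬IsAlgClosed K ∨ ∀ a : A, (Set.range fun x => φ x a).Finite) (I : Ideal A) :
    (∃ F : Filter X, F.NeBot ∧ ∀ f ∈ I, {x | φ x f = 0} ∈ F) ↔ ¬∃ f ∈ I, ∀ x, φ x f ≠ 0 := by
  constructor
  · rintro ⟨F, hF, hmem⟩ ⟨f, hfI, hf⟩
    obtain ⟨x, hx⟩ := nonempty_of_mem (hmem f hfI)
    exact hf x hx
  · intro hI
    push Not at hI
    exact exists_neBot_forall_mem_of_exists_subset_inter _ ⟨0, I.zero_mem⟩ hI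
      fun f hf g hg => hK.elim
        (exists_mem_forall_eq_zero_of_not_isAlgClosed φ hconst · I hf hg)
        (exists_mem_forall_eq_zero_of_finite_range φ hconst · I hf hg)

end RingOfFunctions

theorem stmt10_general {D : Type*} [CommRing D] {E : Set D}
    (R : Subring (↥E → D)) (hconst : ∀ d : D, (fun _ : ↥E => d) ∈ R)
    (M : Ideal D) [hM : M.IsMaximal]
    (hyp : (¬ @IsAlgClosed (D ⧸ M) (Ideal.Quotient.field M)) ∨
      ∀ f : R,
        (Set.range fun e : ↥E => Ideal.Quotient.mk M ((f : ↥E → D) e)).Finite)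
    (I : Ideal R) :
    (∃ F : Filter ↥E, F.NeBot ∧
        ∀ f ∈ I, {e : ↥E | (f : ↥E → D) e ∈ M} ∈ F) ↔
      ¬ ∃ f ∈ I, ∀ e : ↥E, (f : ↥E → D) e ∉ M := by
  let := Ideal.Quotient.field M
  let φ : ↥E → R →+* D ⧸ M := fun e =>
    (Ideal.Quotient.mk M).comp ((Pi.evalRingHom (fun _ => D) e).comp R.subtype)
  have hφconst : ∀ k : D ⧸ M, ∃ f : R, ∀ e, φ e f = k := fun k => by
    obtain ⟨d, rfl⟩ := Ideal.Quotient.mk_surjective k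
    exact ⟨⟨fun _ => d, hconst d⟩, fun _ => rfl⟩
  have hφ : ∀ e f, φ e f = 0 ↔ (f : ↥E → D) e ∈ M :=
    fun _ _ => Ideal.Quotient.eq_zero_iff_mem
  simpa only [hφ, ne_eq] using exists_neBot_forall_setOf_eq_zero_mem_iff φ hφconst hyp I

theorem stmt10 {D : Type*} [CommRing D] [IsDomain D] {E : Set D}
    (R : Subring (↥E → D)) (hconst : ∀ d : D, (fun _ : ↥E => d) ∈ R)
    (M : Ideal D) [hM : M.IsMaximal]
    (hyp : (¬ @IsAlgClosed (D ⧸ M) (Ideal.Quotient.field M)) ∨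
      ∀ f : R,
        (Set.range fun e : ↥E => Ideal.Quotient.mk M ((f : ↥E → D) e)).Finite)
    (I : Ideal R) :
    (∃ F : Filter ↥E, F.NeBot ∧
        ∀ f ∈ I, {e : ↥E | (f : ↥E → D) e ∈ M} ∈ F) ↔
      ¬ ∃ f ∈ I, ∀ e : ↥E, (f : ↥E → D) e ∉ M :=
  stmt10_general R hconst M (hM := hM) hyp I
end

section
/- Let M be a maximal ideal of a domain D and R a ring of functions from E to D. Assume that either D/M is not algebraically closed or each function in R takes values in only finitely many residue classes mod M. Then every ideal Q of R that is maximal with respect to not containing any M-unit-valued function is of the form M_U for some ultrafilter U on E. -/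
/-!
Write `Z(f) = {e | f e ∈ M}`. The zero sets of the elements of `Q` are nonempty, and they are
directed downwards: for `f, g ∈ Q` some `h ∈ (f, g)` has `Z(h) ⊆ Z(f) ∩ Z(g)`. If `D ⧸ M` is not
algebraically closed, take `h = F(f, g)` where `F` is the homogenization of a polynomial over
`D ⧸ M` without roots, its coefficients lifted to constant functions; `F` vanishes only at
`(0, 0)`. If `g` takes finitely many residues, take `h = f * u + g` with `u = ∏ (g - c)` over the
nonzero residues `c` of `g`, which vanishes exactly off `Z(g)`. Hence some ultrafilter `U`
contains every `Z(f)` with `f ∈ Q`, that is `Q ⊆ M_U`; since `M_U` contains no `M`-unit-valued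
function, `Q = M_U` by maximality.
-/

open Filter Finset Polynomial

namespace Polynomial

theorem eval_homogenize_eq_sum {R : Type*} [CommSemiring R] (p : R[X]) (n : ℕ)
    (x : Fin 2 → R) :
    MvPolynomial.eval x (p.homogenize n) =
      ∑ kl ∈ antidiagonal n, p.coeff kl.1 * x 0 ^ kl.1 * x 1 ^ kl.2 := by
  simp [homogenize, MvPolynomial.eval_monomial, Finsupp.prod_fintype, mul_assoc]

theorem eq_zero_of_eval_homogenize_eq_zero {K : Type*} [Field K] {p : K[X]}
    (hp : ∀ x, ¬p.IsRoot x) {a b : K}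
    (h : MvPolynomial.eval ![a, b] (p.homogenize p.natDegree) = 0) : a = 0 ∧ b = 0 := by
  obtain rfl : b = 0 := by
    by_contra hb
    rw [eval_homogenize le_rfl _ (by simpa using hb)] at h
    exact hp _ (by simpa [hb] using h)
  refine ⟨?_, rfl⟩
  have hp0 : p ≠ 0 := fun h0 => hp 0 (by simp [h0])
  rw [eval_homogenize_eq_sum, sum_eq_single (p.natDegree, 0)] at h
  · simp only [coeff_natDegree, leadingCoeff_eq_zero, hp0, pow_zero, mul_one, mul_eq_zero,
      false_or] at h
    exact eq_zero_of_pow_eq_zero h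
  · rintro ⟨k, l⟩ hkl hne
    have : l ≠ 0 := by rintro rfl; simp_all
    simp [this]
  · simp

end Polynomial

section ZeroSet

variable {ι A B : Type*} [CommSemiring A] [Semiring B] (φ : ι → A →+* B)

def zeroSet (a : A) : Set ι := {i | φ i a = 0}

@[simp]
theorem mem_zeroSet {a : A} {i : ι} : i ∈ zeroSet φ a ↔ φ i a = 0 := Iff.rfl

/-- The ideal `M_U` of the paper, for `φ = residueEval R M`. -/
def zeroSetIdeal (U : Ultrafilter ι) : Ideal A where
  carrier := {a | zeroSet φ a ∈ U}
  zero_mem' := mem_of_superset univ_mem fun i _ => map_zero (φ i)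
  add_mem' ha hb := mem_of_superset (inter_mem ha hb) fun i ⟨hai, hbi⟩ => by simp_all
  smul_mem' c a ha := mem_of_superset ha fun i hi => by simp_all

@[simp]
theorem mem_zeroSetIdeal {U : Ultrafilter ι} {a : A} :
    a ∈ zeroSetIdeal φ U ↔ zeroSet φ a ∈ U := Iff.rfl

theorem exists_ultrafilter_le_zeroSetIdeal {Q : Ideal A}
    (hne : ∀ a ∈ Q, (zeroSet φ a).Nonempty)
    (hdir : ∀ a ∈ Q, ∀ b ∈ Q, ∃ c ∈ Q, zeroSet φ c ⊆ zeroSet φ a ∩ zeroSet φ b) :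
    ∃ U : Ultrafilter ι, Q ≤ zeroSetIdeal φ U := by
  let F : Filter ι := ⨅ a : Q, 𝓟 (zeroSet φ a)
  have : F.NeBot := by
    refine iInf_neBot_of_directed' ?_ fun a => principal_neBot_iff.2 (hne a a.2)
    rintro ⟨a, ha⟩ ⟨b, hb⟩
    obtain ⟨c, hc, hsub⟩ := hdir a ha b hb
    exact ⟨⟨c, hc⟩, principal_mono.2 (hsub.trans Set.inter_subset_left),
      principal_mono.2 (hsub.trans Set.inter_subset_right)⟩
  exact ⟨Ultrafilter.of F, fun a ha =>
    Ultrafilter.of_le F (mem_iInf_of_mem ⟨a, ha⟩ (mem_principal_self _))⟩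

theorem exists_eq_zeroSetIdeal_of_maximal {Q : Ideal A}
    (hQ : Maximal (fun I : Ideal A => ∀ a ∈ I, (zeroSet φ a).Nonempty) Q)
    (hdir : ∀ a ∈ Q, ∀ b ∈ Q, ∃ c ∈ Q, zeroSet φ c ⊆ zeroSet φ a ∩ zeroSet φ b) :
    ∃ U : Ultrafilter ι, Q = zeroSetIdeal φ U := by
  obtain ⟨U, hle⟩ := exists_ultrafilter_le_zeroSetIdeal φ hQ.1 hdir
  exact ⟨U, hle.antisymm (hQ.2 (fun a ha => U.nonempty_of_mem ha) hle)⟩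

end ZeroSet

section FieldValued

variable {ι A K : Type*} [CommRing A] [Field K] (φ : ι → A →+* K)

theorem exists_mem_span_pair_zeroSet_subset_of_not_isAlgClosed
    (hconst : ∀ x : K, ∃ a : A, ∀ i, φ i a = x) (hK : ¬IsAlgClosed K) (a b : A) :
    ∃ c ∈ Ideal.span {a, b}, zeroSet φ c ⊆ zeroSet φ a ∩ zeroSet φ b := by
  obtain ⟨p, hdeg, hroot⟩ : ∃ p : K[X], 0 < p.natDegree ∧ ∀ x, ¬p.IsRoot x := by
    contrapose! hK
    exact IsAlgClosed.of_exists_root _ fun p _ hirr => hK p hirr.natDegree_pos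
  choose lift hlift using hconst
  refine ⟨∑ kl ∈ antidiagonal p.natDegree, lift (p.coeff kl.1) * a ^ kl.1 * b ^ kl.2,
    Ideal.sum_mem _ fun kl hkl => ?_, fun i hi => ?_⟩
  · rcases Nat.eq_zero_or_pos kl.1 with h0 | hpos
    · have : 0 < kl.2 := by have := mem_antidiagonal.1 hkl; omega
      exact Ideal.mul_mem_left _ _ (Ideal.pow_mem_of_mem _ (Ideal.subset_span (by simp)) _ this)
    · exact Ideal.mul_mem_right _ _
        (Ideal.mul_mem_left _ _ (Ideal.pow_mem_of_mem _ (Ideal.subset_span (by simp)) _ hpos))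
  · refine p.eq_zero_of_eval_homogenize_eq_zero hroot ?_
    rw [eval_homogenize_eq_sum]
    simpa [hlift] using hi

theorem exists_zeroSet_eq_compl (hconst : ∀ x : K, ∃ a : A, ∀ i, φ i a = x) {a : A}
    (hfin : (Set.range fun i => φ i a).Finite) :
    ∃ u : A, zeroSet φ u = (zeroSet φ a)ᶜ := by
  choose lift hlift using hconst
  refine ⟨∏ x ∈ (hfin.sdiff (t := {0})).toFinset, (a - lift x), ?_⟩
  ext i
  simp [map_prod, hlift, prod_eq_zero_iff, sub_eq_zero]

theorem exists_mem_span_pair_zeroSet_subset_of_finite_range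
    (hconst : ∀ x : K, ∃ a : A, ∀ i, φ i a = x)
    (hfin : ∀ a : A, (Set.range fun i => φ i a).Finite) (a b : A) :
    ∃ c ∈ Ideal.span {a, b}, zeroSet φ c ⊆ zeroSet φ a ∩ zeroSet φ b := by
  obtain ⟨u, hu⟩ := exists_zeroSet_eq_compl φ hconst (hfin b)
  refine ⟨a * u + b, Ideal.mem_span_pair.2 ⟨u, 1, by ring⟩, fun i hi => ?_⟩
  have hui : φ i u = 0 ↔ φ i b ≠ 0 := by simpa using congrArg (i ∈ ·) hu
  by_cases hb : φ i b = 0 <;> simp_all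

end FieldValued

def residueEval {ι D : Type*} [CommRing D] (R : Subring (ι → D)) (M : Ideal D) (i : ι) :
    R →+* D ⧸ M :=
  (Ideal.Quotient.mk M).comp ((Pi.evalRingHom _ i).comp R.subtype)

theorem zeroSet_residueEval {ι D : Type*} [CommRing D] (R : Subring (ι → D)) (M : Ideal D)
    (f : R) : zeroSet (residueEval R M) f = {i | (f : ι → D) i ∈ M} :=
  Set.ext fun _ => Ideal.Quotient.eq_zero_iff_mem

theorem stmt11_general {D : Type*} [CommRing D] {E : Set D}
    (R : Subring (↥E → D)) (hconst : ∀ d : D, (fun _ : ↥E => d) ∈ R)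
    (M : Ideal D) [hM : M.IsMaximal]
    (hyp : (¬ @IsAlgClosed (D ⧸ M) (Ideal.Quotient.field M)) ∨
      ∀ f : R,
        (Set.range fun e : ↥E => Ideal.Quotient.mk M ((f : ↥E → D) e)).Finite)
    (Q : Ideal R)
    (hQ : ¬ ∃ f ∈ Q, ∀ e : ↥E, (f : ↥E → D) e ∉ M)
    (hQmax : ∀ Q' : Ideal R, Q ≤ Q' →
      (¬ ∃ f ∈ Q', ∀ e : ↥E, (f : ↥E → D) e ∉ M) → Q' = Q) :
    ∃ U : Ultrafilter ↥E, ∀ f : R, f ∈ Q ↔ {e : ↥E | (f : ↥E → D) e ∈ M} ∈ U := by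
  let _ : Field (D ⧸ M) := Ideal.Quotient.field M
  have hconst' : ∀ x : D ⧸ M, ∃ f : R, ∀ e, residueEval R M e f = x := fun x => by
    obtain ⟨d, rfl⟩ := Ideal.Quotient.mk_surjective x
    exact ⟨⟨_, hconst d⟩, fun _ => rfl⟩
  have hpair : ∀ f g : R, ∃ h ∈ Ideal.span {f, g},
      zeroSet (residueEval R M) h ⊆ zeroSet (residueEval R M) f ∩ zeroSet (residueEval R M) g :=
    hyp.elim (exists_mem_span_pair_zeroSet_subset_of_not_isAlgClosed _ hconst')
      (exists_mem_span_pair_zeroSet_subset_of_finite_range _ hconst')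
  have hnonempty (I : Ideal R) : (∀ f ∈ I, (zeroSet (residueEval R M) f).Nonempty) ↔
      ¬ ∃ f ∈ I, ∀ e : ↥E, (f : ↥E → D) e ∉ M := by
    simp only [zeroSet_residueEval, Set.Nonempty, Set.mem_ofPred_eq, not_exists, not_and,
      not_forall, not_not]
  obtain ⟨U, rfl⟩ := exists_eq_zeroSetIdeal_of_maximal (residueEval R M)
    ⟨(hnonempty Q).2 hQ, fun I hI hle => (hQmax I hle ((hnonempty I).1 hI)).le⟩
    fun f hf g hg => (hpair f g).imp fun h ⟨hmem, hsub⟩ =>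
      ⟨Ideal.span_le.2 (Set.insert_subset hf (Set.singleton_subset_iff.2 hg)) hmem, hsub⟩
  exact ⟨U, fun f => by rw [mem_zeroSetIdeal, zeroSet_residueEval]⟩

theorem stmt11 {D : Type*} [CommRing D] [IsDomain D] {E : Set D}
    (R : Subring (↥E → D)) (hconst : ∀ d : D, (fun _ : ↥E => d) ∈ R)
    (M : Ideal D) [hM : M.IsMaximal]
    (hyp : (¬ @IsAlgClosed (D ⧸ M) (Ideal.Quotient.field M)) ∨
      ∀ f : R,
        (Set.range fun e : ↥E => Ideal.Quotient.mk M ((f : ↥E → D) e)).Finite)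
    (Q : Ideal R)
    (hQ : ¬ ∃ f ∈ Q, ∀ e : ↥E, (f : ↥E → D) e ∉ M)
    (hQmax : ∀ Q' : Ideal R, Q ≤ Q' →
      (¬ ∃ f ∈ Q', ∀ e : ↥E, (f : ↥E → D) e ∉ M) → Q' = Q) :
    ∃ U : Ultrafilter ↥E, ∀ f : R, f ∈ Q ↔ {e : ↥E | (f : ↥E → D) e ∈ M} ∈ U :=
  stmt11_general R hconst M (hM := hM) hyp Q hQ hQmax
end

section
/- Let M be a maximal ideal of a domain D and Q a maximal ideal of a ring of functions R from E to D. Then exactly one of the following holds: (1) Q contains R(E,M) = {f ∈ R : f(E) ⊆ M}; (2) Q contains an element f with f(e) ≡ 1 mod M for all e ∈ E. -/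
theorem stmt12 {D : Type*} [CommRing D] [IsDomain D] {E : Set D}
    (R : Subring (↥E → D)) (hconst : ∀ d : D, (fun _ : ↥E => d) ∈ R)
    (M : Ideal D) (hM : M.IsMaximal)
    (Q : Ideal R) (hQ : Q.IsMaximal) :
    Xor' (∀ f : R, (∀ e : ↥E, (f : ↥E → D) e ∈ M) → f ∈ Q)
      (∃ f ∈ Q, ∀ e : ↥E, (f : ↥E → D) e - 1 ∈ M) := by
  by_cases hA : ∀ f : R, (∀ e : ↥E, (f : ↥E → D) e ∈ M) → f ∈ Q
  · left
    refine ⟨hA, ?_⟩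
    rintro ⟨f, hfQ, hf⟩
    have h1 : (1 - f : R) ∈ Q := by
      apply hA
      intro e
      have : ((1 - f : R) : ↥E → D) e = -((f : ↥E → D) e - 1) := by
        push_cast; simp
      rw [this]
      exact M.neg_mem (hf e)
    have : (1 : R) ∈ Q := by
      have := Q.add_mem hfQ h1
      simpa using this
    exact hQ.ne_top (Q.eq_top_iff_one.mpr this)
  · right
    push_neg at hA
    obtain ⟨g, hg, hgQ⟩ := hA
    refine ⟨?_, fun h => hgQ (h g hg)⟩
    obtain ⟨y, i, hiQ, hyi⟩ := hQ.exists_inv hgQ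
    refine ⟨i, hiQ, fun e => ?_⟩
    have : (i : ↥E → D) e - 1 = -((y : ↥E → D) e * (g : ↥E → D) e) := by
      have := congrFun (congrArg (Subtype.val) hyi) e
      push_cast at this
      simp at this ⊢
      linear_combination this
    rw [this]
    exact M.neg_mem (M.mul_mem_left _ (hg e))
end

section
/- Let M be an ideal of a domain D and Q an ideal of a ring of functions R from E to D. If Q contains an M-unit-valued function g that takes values in only finitely many residue classes mod M, then Q contains an element f with f(e) ≡ 1 mod M for all e ∈ E. -/
/-- In a commutative ring, a product of `x - a i` can be written as
`x * r + ∏ (-a i)` for some `r`. -/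
lemma prod_sub_aux {A : Type*} [CommRing A] (x : A) {ι : Type*} (s : Finset ι)
    (a : ι → A) : ∃ r : A, ∏ i ∈ s, (x - a i) = x * r + ∏ i ∈ s, (-a i) := by
  classical
  induction s using Finset.induction with
  | empty => exact ⟨0, by simp⟩
  | @insert j t hj ih =>
    obtain ⟨r, hr⟩ := ih
    refine ⟨(x - a j) * r + ∏ i ∈ t, (-a i), ?_⟩
    rw [Finset.prod_insert hj, Finset.prod_insert hj, hr]
    ring

set_option synthInstance.maxHeartbeats 400000 in
theorem stmt13 {D : Type*} [CommRing D] [IsDomain D] {E : Set D}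
    (R : Subring (↥E → D)) (hconst : ∀ d : D, (fun _ : ↥E => d) ∈ R)
    (M : Ideal D) (Q : Ideal R) (g : R) (hgQ : g ∈ Q)
    (hunit : ∀ e : ↥E, IsUnit (Ideal.Quotient.mk M ((g : ↥E → D) e)))
    (hfin : (Set.range fun e : ↥E => Ideal.Quotient.mk M ((g : ↥E → D) e)).Finite) :
    ∃ f ∈ Q, ∀ e : ↥E, (f : ↥E → D) e - 1 ∈ M := by
  classical
  set π := Ideal.Quotient.mk M with hπ
  -- constants as a ring hom into R
  let C : D →+* R :=
    { toFun := fun d => ⟨fun _ => d, hconst d⟩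
      map_one' := rfl
      map_mul' := fun _ _ => rfl
      map_zero' := rfl
      map_add' := fun _ _ => rfl }
  -- evaluation ring hom
  let ev : ↥E → (R →+* D) := fun e => (Pi.evalRingHom (fun _ => D) e).comp R.subtype
  have hev : ∀ (e : ↥E) (x : R), ev e x = (x : ↥E → D) e := fun _ _ => rfl
  -- finite set of residues
  let S : Finset (D ⧸ M) := hfin.toFinset
  -- lifts of residues
  have hsurj : Function.Surjective π := Ideal.Quotient.mk_surjective
  let d : (D ⧸ M) → D := Function.surjInv hsurj
  have hd : ∀ u, π (d u) = u := fun u => Function.surjInv_eq hsurj u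
  -- decompose the product ∏ (g - C (d u))
  obtain ⟨r, hr⟩ := prod_sub_aux (A := R) g S (fun u => C (d u))
  -- the constant term
  set c : D := ∏ u ∈ S, (-(d u)) with hc
  have hCc : ∏ u ∈ S, (-(C (d u))) = C c := by
    rw [hc, map_prod]
    simp
  -- each residue in S is a unit
  have hSunit : ∀ u ∈ S, IsUnit u := by
    intro u hu
    have : u ∈ Set.range fun e : ↥E => π ((g : ↥E → D) e) := by
      simpa [S] using hu
    obtain ⟨e, he⟩ := this
    exact he ▸ hunit e
  have hcunit : IsUnit (π c) := by
    rw [hc, map_prod]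
    exact Finset.prod_induction _ IsUnit (fun _ _ => IsUnit.mul) isUnit_one
      (fun u hu => by rw [map_neg, hd]; exact (hSunit u hu).neg)
  obtain ⟨v, hv⟩ := hcunit.exists_left_inv
  obtain ⟨w, hw⟩ := hsurj v
  -- key: π (g e) * π (r e) = - π c
  have key : ∀ e : ↥E, π ((g : ↥E → D) e) * π ((r : ↥E → D) e) = -π c := by
    intro e
    have h0 : π ((ev e) (∏ u ∈ S, (g - C (d u)))) = 0 := by
      rw [map_prod, map_prod]
      have : π ((g : ↥E → D) e) ∈ S := by
        simp only [S, Set.Finite.mem_toFinset]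
        exact ⟨e, rfl⟩
      refine Finset.prod_eq_zero this ?_
      show π ((g : ↥E → D) e - d (π ((g : ↥E → D) e))) = 0
      rw [map_sub, hd, sub_self]
    rw [hr] at h0
    have hPe : (ev e) (∏ u ∈ S, -(C (d u))) = c := by rw [hCc]; rfl
    rw [map_add (ev e), map_mul (ev e), hPe] at h0
    have h0' : π ((g : ↥E → D) e) * π ((r : ↥E → D) e) + π c = 0 := by
      rw [← map_mul, ← map_add]
      exact h0
    exact eq_neg_of_add_eq_zero_left h0'
  refine ⟨C (-w) * r * g, Q.mul_mem_left _ hgQ, ?_⟩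
  intro e
  have hfe : ((C (-w) * r * g : R) : ↥E → D) e = (-w) * (r : ↥E → D) e * (g : ↥E → D) e := rfl
  rw [← Ideal.Quotient.eq_zero_iff_mem, map_sub, hfe]
  have : π ((-w) * (r : ↥E → D) e * (g : ↥E → D) e) = 1 := by
    rw [map_mul, map_mul, map_neg, hw]
    have hk := key e
    calc -v * π ((r : ↥E → D) e) * π ((g : ↥E → D) e)
        = v * -(π ((g : ↥E → D) e) * π ((r : ↥E → D) e)) := by ring
      _ = v * π c := by rw [hk]; ring
      _ = 1 := hv
  rw [this, map_one, sub_self]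
end

section
/- Let M be a maximal ideal of a domain D and Q a maximal ideal of a ring of functions R from E to D. If each f ∈ R takes values in only finitely many residue classes mod M, then exactly one of the following holds: (1) Q contains R(E,M) = {f ∈ R : f(E) ⊆ M}; (2) Q contains an M-unit-valued function. -/
/-!
If some `f ∈ Q` is `M`-unit-valued, its values lie in finitely many residue classes
`r₁, …, rₙ` mod `M`, none of them zero. Then `g = ∏ (f - rⱼ)` is `M`-valued, while modulo `Q`
it is the constant `∏ (-rⱼ)`, which is a unit mod `M`; so `R(E,M) ⊆ Q` would force `1 ∈ Q`.
Conversely, if `f ∈ R(E,M) \ Q`, maximality gives `g f + q = 1` with `q ∈ Q`, and `q = 1 - g f`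
is `M`-unit-valued.
-/

open Polynomial

section ResidueClasses

variable {D ι : Type*} [CommRing D] {M : Ideal D}

theorem exists_polynomial_coeff_zero_notMem_eval_mem [M.IsPrime] {v : ι → D}
    (hfin : (Set.range fun i => Ideal.Quotient.mk M (v i)).Finite) (hv : ∀ i, v i ∉ M) :
    ∃ p : D[X], p.coeff 0 ∉ M ∧ ∀ i, p.eval (v i) ∈ M := by
  classical
  set rep : D ⧸ M → D := Function.surjInv Ideal.Quotient.mk_surjective
  have mk_rep (s : D ⧸ M) : Ideal.Quotient.mk M (rep s) = s :=
    Function.surjInv_eq Ideal.Quotient.mk_surjective s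
  refine ⟨∏ s ∈ hfin.toFinset, (X - C (rep s)), ?_, fun i => ?_⟩
  · simp only [coeff_zero_eq_eval_zero, eval_prod, eval_sub, eval_X, eval_C, zero_sub,
      Ideal.IsPrime.prod_mem_iff, not_exists, not_and, Set.Finite.mem_toFinset, Set.mem_range,
      neg_mem_iff]
    rintro _ ⟨i, rfl⟩ hrep
    apply hv i
    rw [← Ideal.Quotient.eq_zero_iff_mem, ← mk_rep (Ideal.Quotient.mk M (v i)),
      Ideal.Quotient.eq_zero_iff_mem]
    exact hrep
  · simp only [eval_prod, eval_sub, eval_X, eval_C, Ideal.IsPrime.prod_mem_iff]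
    exact ⟨_, by simp, Ideal.Quotient.eq.mp (mk_rep _).symm⟩

end ResidueClasses

section FunctionRing

variable {D ι : Type*} [CommRing D] {R : Subring (ι → D)} {M : Ideal D} {Q : Ideal R}

theorem exists_mem_forall_apply_notMem_of_notMem (hM : M ≠ ⊤) (hQ : Q.IsMaximal) {f : R}
    (hfM : ∀ i, (f : ι → D) i ∈ M) (hfQ : f ∉ Q) :
    ∃ q ∈ Q, ∀ i, (q : ι → D) i ∉ M := by
  obtain ⟨g, q, hqQ, hgfq⟩ := hQ.exists_inv hfQ
  refine ⟨q, hqQ, fun i hqM => hM ((Ideal.eq_top_iff_one M).mpr ?_)⟩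
  have hval : (g : ι → D) i * (f : ι → D) i + (q : ι → D) i = 1 :=
    congr_fun (congr_arg Subtype.val hgfq) i
  exact hval ▸ M.add_mem (M.mul_mem_left _ (hfM i)) hqM

theorem not_forall_mem_of_mem_forall_apply_notMem (hconst : ∀ d : D, (fun _ : ι => d) ∈ R)
    (hM : M.IsMaximal) (hQ : Q ≠ ⊤) {f : R}
    (hfin : (Set.range fun i => Ideal.Quotient.mk M ((f : ι → D) i)).Finite)
    (hfQ : f ∈ Q) (hfM : ∀ i, (f : ι → D) i ∉ M) :
    ¬ ∀ g : R, (∀ i, (g : ι → D) i ∈ M) → g ∈ Q := by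
  intro hQM
  let const : D →+* R := (Pi.constRingHom ι D).codRestrict R hconst
  obtain ⟨p, hp0, hpM⟩ := exists_polynomial_coeff_zero_notMem_eval_mem hfin hfM
  have hpf : p.eval₂ const f ∈ Q := hQM _ fun i => by
    change (Pi.evalRingHom (fun _ => D) i).comp R.subtype (p.eval₂ const f) ∈ M
    rw [hom_eval₂]
    exact hpM i
  -- modulo `Q`, `f` vanishes, so `p(f)` becomes the constant `p(0)`
  have hp0Q : const (p.coeff 0) ∈ Q := by
    rw [← Ideal.Quotient.eq_zero_iff_mem] at hpf hfQ ⊢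
    rwa [hom_eval₂, hfQ, eval₂_at_zero] at hpf
  obtain ⟨d, m, hm, hdm⟩ := hM.exists_inv hp0
  refine hQ ((Ideal.eq_top_iff_one Q).mpr ?_)
  rw [← map_one const, ← hdm, map_add, map_mul]
  exact Q.add_mem (Q.mul_mem_left _ hp0Q) (hQM _ fun _ => hm)

end FunctionRing

theorem stmt14_general {D : Type*} [CommRing D] {E : Set D}
    (R : Subring (↥E → D)) (hconst : ∀ d : D, (fun _ : ↥E => d) ∈ R)
    (M : Ideal D) (hM : M.IsMaximal)
    (hfin : ∀ f : R,
      (Set.range fun e : ↥E => Ideal.Quotient.mk M ((f : ↥E → D) e)).Finite)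
    (Q : Ideal R) (hQ : Q.IsMaximal) :
    Xor' (∀ f : R, (∀ e : ↥E, (f : ↥E → D) e ∈ M) → f ∈ Q)
      (∃ f ∈ Q, ∀ e : ↥E, (f : ↥E → D) e ∉ M) := by
  refine xor_iff_iff_not.mpr ⟨?_, ?_⟩
  · rintro hQM ⟨f, hfQ, hfM⟩
    exact not_forall_mem_of_mem_forall_apply_notMem hconst hM hQ.ne_top (hfin f) hfQ hfM hQM
  · intro hnot f hfM
    by_contra hfQ
    exact hnot (exists_mem_forall_apply_notMem_of_notMem hM.ne_top hQ hfM hfQ)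

theorem stmt14 {D : Type*} [CommRing D] [IsDomain D] {E : Set D}
    (R : Subring (↥E → D)) (hconst : ∀ d : D, (fun _ : ↥E => d) ∈ R)
    (M : Ideal D) (hM : M.IsMaximal)
    (hfin : ∀ f : R,
      (Set.range fun e : ↥E => Ideal.Quotient.mk M ((f : ↥E → D) e)).Finite)
    (Q : Ideal R) (hQ : Q.IsMaximal) :
    Xor' (∀ f : R, (∀ e : ↥E, (f : ↥E → D) e ∈ M) → f ∈ Q)
      (∃ f ∈ Q, ∀ e : ↥E, (f : ↥E → D) e ∉ M) :=
  stmt14_general R hconst M hM hfin Q hQ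
end

section
/- Let M be a maximal ideal of a domain D such that every function in the ring of functions R from E to D takes values in only finitely many residue classes mod M, and let Q be a prime ideal of R containing R(E,M) = {f : f(E) ⊆ M}. Then Q is a maximal ideal of R and R/Q is isomorphic to D/M. -/
/-!
Composing the constant-function embedding `c : D → R` with `R → R/Q` gives a map that kills `M`,
hence has kernel exactly `M` because `M` is maximal and `Q` is proper. It is also surjective: if
`f` takes the residues `d₁, …, dₙ` mod `M`, then `∏ᵢ (f - c dᵢ)` takes values in `M`, so it lies
in `Q`, and as `Q` is prime some `f - c dᵢ` lies in `Q`. Thus `R/Q ≅ D/M`, a field.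
-/

namespace Subring

variable {ι D : Type*} [CommRing D] (R : Subring (ι → D))
  (hconst : ∀ d : D, (fun _ : ι => d) ∈ R)

def constHom : D →+* R where
  toFun d := ⟨fun _ => d, hconst d⟩
  map_one' := rfl
  map_mul' _ _ := rfl
  map_zero' := rfl
  map_add' _ _ := rfl

@[simp]
theorem coe_constHom_apply (d : D) (i : ι) : (R.constHom hconst d : ι → D) i = d := rfl

variable {R hconst} {M : Ideal D} {Q : Ideal R}

theorem ker_mk_comp_constHom (hM : M.IsMaximal) (hQ : Q ≠ ⊤)
    (hQM : ∀ f : R, (∀ i, (f : ι → D) i ∈ M) → f ∈ Q) :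
    RingHom.ker ((Ideal.Quotient.mk Q).comp (R.constHom hconst)) = M :=
  have := Ideal.Quotient.nontrivial_iff.mpr hQ
  (hM.eq_of_le (RingHom.ker_ne_top ((Ideal.Quotient.mk Q).comp (R.constHom hconst))) fun _ hd =>
    Ideal.Quotient.eq_zero_iff_mem.mpr (hQM _ fun _ => hd)).symm

theorem exists_sub_constHom_mem (hQ : Q.IsPrime)
    (hQM : ∀ f : R, (∀ i, (f : ι → D) i ∈ M) → f ∈ Q) (f : R)
    (hf : (Set.range fun i => Ideal.Quotient.mk M ((f : ι → D) i)).Finite) :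
    ∃ d : D, f - R.constHom hconst d ∈ Q := by
  classical
  choose lift hlift using (Ideal.Quotient.mk_surjective : Function.Surjective (Ideal.Quotient.mk M))
  have hprod : ∏ r ∈ hf.toFinset, (f - R.constHom hconst (lift r)) ∈ Q := by
    refine hQM _ fun i => ?_
    have hi : Ideal.Quotient.mk M ((f : ι → D) i) ∈ hf.toFinset := by simp
    rw [SubmonoidClass.coe_finsetProd, Finset.prod_apply, ← Finset.prod_erase_mul _ _ hi]
    refine M.mul_mem_left _ ?_
    simp [← Ideal.Quotient.eq, hlift]
  obtain ⟨r, -, hr⟩ := hQ.prod_mem_iff.mp hprod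
  exact ⟨lift r, hr⟩

theorem surjective_mk_comp_constHom (hQ : Q.IsPrime)
    (hQM : ∀ f : R, (∀ i, (f : ι → D) i ∈ M) → f ∈ Q)
    (hfin : ∀ f : R, (Set.range fun i => Ideal.Quotient.mk M ((f : ι → D) i)).Finite) :
    Function.Surjective ((Ideal.Quotient.mk Q).comp (R.constHom hconst)) := by
  rintro ⟨f⟩
  obtain ⟨d, hd⟩ := exists_sub_constHom_mem hQ hQM f (hfin f)
  exact ⟨d, (Ideal.Quotient.eq.mpr hd).symm⟩

end Subring

theorem stmt15_general {D : Type*} [CommRing D] {E : Set D}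
    (R : Subring (↥E → D)) (hconst : ∀ d : D, (fun _ : ↥E => d) ∈ R)
    (M : Ideal D) (hM : M.IsMaximal)
    (hfin : ∀ f : R,
      (Set.range fun e : ↥E => Ideal.Quotient.mk M ((f : ↥E → D) e)).Finite)
    (Q : Ideal R) (hQ : Q.IsPrime)
    (hQM : ∀ f : R, (∀ e : ↥E, (f : ↥E → D) e ∈ M) → f ∈ Q) :
    Q.IsMaximal ∧ Nonempty ((R ⧸ Q) ≃+* D ⧸ M) := by
  let := Ideal.Quotient.field M
  let e : (D ⧸ M) ≃+* R ⧸ Q :=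
    (Ideal.quotEquivOfEq
      (Subring.ker_mk_comp_constHom (hconst := hconst) hM hQ.ne_top hQM).symm).trans
      (RingHom.quotientKerEquivOfSurjective (Subring.surjective_mk_comp_constHom hQ hQM hfin))
  have hQ_ker : RingHom.ker (e.symm.toRingHom.comp (Ideal.Quotient.mk Q)) = Q := by
    rw [RingHom.ker_equiv_comp, Ideal.mk_ker]
  refine ⟨?_, ⟨e.symm⟩⟩
  rw [← hQ_ker]
  exact RingHom.ker_isMaximal_of_surjective _
    (e.symm.surjective.comp Ideal.Quotient.mk_surjective :)

theorem stmt15 {D : Type*} [CommRing D] [IsDomain D] {E : Set D}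
    (R : Subring (↥E → D)) (hconst : ∀ d : D, (fun _ : ↥E => d) ∈ R)
    (M : Ideal D) (hM : M.IsMaximal)
    (hfin : ∀ f : R,
      (Set.range fun e : ↥E => Ideal.Quotient.mk M ((f : ↥E → D) e)).Finite)
    (Q : Ideal R) (hQ : Q.IsPrime)
    (hQM : ∀ f : R, (∀ e : ↥E, (f : ↥E → D) e ∈ M) → f ∈ Q) :
    Q.IsMaximal ∧ Nonempty ((R ⧸ Q) ≃+* D ⧸ M) :=
  stmt15_general R hconst M hM hfin Q hQ hQM
end

section
/- Let M be a maximal ideal of a domain D such that every f in the ring of functions R from E to D takes values in only finitely many residue classes mod M. Then the prime ideals of R containing R(E,M) = {f : f(E) ⊆ M} are exactly the ideals of the form M_U with U an ultrafilter on E; each such ideal is maximal with residue field isomorphic to D/M. -/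
set_option linter.unusedSectionVars false

section StmtAux
variable {D : Type*} [CommRing D] [IsDomain D] {E : Set D}
  {R : Subring (↥E → D)} {M : Ideal D}

private lemma stmt17_lim_exists (U : Ultrafilter ↥E) (f : R)
    (hf : (Set.range fun e : ↥E => Ideal.Quotient.mk M ((f : ↥E → D) e)).Finite) :
    ∃ x : D ⧸ M, {e : ↥E | Ideal.Quotient.mk M ((f : ↥E → D) e) = x} ∈ U := by
  have hmem : (Set.range fun e : ↥E => Ideal.Quotient.mk M ((f : ↥E → D) e)) ∈
      U.map (fun e : ↥E => Ideal.Quotient.mk M ((f : ↥E → D) e)) := by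
    rw [Ultrafilter.mem_map]
    exact Filter.univ_mem' (fun e => Set.mem_range_self e)
  obtain ⟨x, -, hx⟩ := Ultrafilter.eq_pure_of_finite_mem hf hmem
  refine ⟨x, ?_⟩
  have : {x} ∈ U.map (fun e : ↥E => Ideal.Quotient.mk M ((f : ↥E → D) e)) := by
    rw [hx]; exact Filter.mem_pure.2 rfl
  rw [Ultrafilter.mem_map] at this
  exact this

private lemma stmt17_lim_unique (U : Ultrafilter ↥E) {g : ↥E → D ⧸ M} {x y : D ⧸ M}
    (hx : {e | g e = x} ∈ U) (hy : {e | g e = y} ∈ U) : x = y := by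
  obtain ⟨e, he1, he2⟩ := Ultrafilter.nonempty_of_mem (U.toFilter.inter_mem hx hy)
  exact he1.symm.trans he2

private noncomputable def stmt17_phiFun (hfin : ∀ f : R,
      (Set.range fun e : ↥E => Ideal.Quotient.mk M ((f : ↥E → D) e)).Finite)
    (U : Ultrafilter ↥E) (f : R) : D ⧸ M :=
  (stmt17_lim_exists U f (hfin f)).choose

private lemma stmt17_phiFun_spec (hfin : ∀ f : R,
      (Set.range fun e : ↥E => Ideal.Quotient.mk M ((f : ↥E → D) e)).Finite)
    (U : Ultrafilter ↥E) (f : R) :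
    {e : ↥E | Ideal.Quotient.mk M ((f : ↥E → D) e) = stmt17_phiFun hfin U f} ∈ U :=
  (stmt17_lim_exists U f (hfin f)).choose_spec

private lemma stmt17_phiFun_eq (hfin : ∀ f : R,
      (Set.range fun e : ↥E => Ideal.Quotient.mk M ((f : ↥E → D) e)).Finite)
    (U : Ultrafilter ↥E) (f : R) {x : D ⧸ M}
    (h : {e : ↥E | Ideal.Quotient.mk M ((f : ↥E → D) e) = x} ∈ U) :
    stmt17_phiFun hfin U f = x :=
  stmt17_lim_unique U (stmt17_phiFun_spec hfin U f) h

private noncomputable def stmt17_Phi (hfin : ∀ f : R,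
      (Set.range fun e : ↥E => Ideal.Quotient.mk M ((f : ↥E → D) e)).Finite)
    (U : Ultrafilter ↥E) : R →+* D ⧸ M where
  toFun := stmt17_phiFun hfin U
  map_one' := stmt17_phiFun_eq hfin U 1 (by
    refine Filter.univ_mem' (fun e => ?_)
    show Ideal.Quotient.mk M (((1 : R) : ↥E → D) e) = 1
    simp)
  map_mul' f g := stmt17_phiFun_eq hfin U (f * g) (by
    have h1 := stmt17_phiFun_spec hfin U f
    have h2 := stmt17_phiFun_spec hfin U g
    filter_upwards [h1, h2] with e he1 he2
    show Ideal.Quotient.mk M (((f * g : R) : ↥E → D) e) = _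
    push_cast
    rw [Pi.mul_apply, map_mul, he1, he2])
  map_zero' := stmt17_phiFun_eq hfin U 0 (by
    refine Filter.univ_mem' (fun e => ?_)
    show Ideal.Quotient.mk M (((0 : R) : ↥E → D) e) = 0
    simp)
  map_add' f g := stmt17_phiFun_eq hfin U (f + g) (by
    have h1 := stmt17_phiFun_spec hfin U f
    have h2 := stmt17_phiFun_spec hfin U g
    filter_upwards [h1, h2] with e he1 he2
    show Ideal.Quotient.mk M (((f + g : R) : ↥E → D) e) = _
    push_cast
    rw [Pi.add_apply, map_add, he1, he2])

private lemma stmt17_Phi_surjective (hfin : ∀ f : R,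
      (Set.range fun e : ↥E => Ideal.Quotient.mk M ((f : ↥E → D) e)).Finite)
    (hconst : ∀ d : D, (fun _ : ↥E => d) ∈ R) (U : Ultrafilter ↥E) :
    Function.Surjective (stmt17_Phi hfin U) := by
  intro x
  obtain ⟨d, rfl⟩ := Ideal.Quotient.mk_surjective x
  refine ⟨⟨fun _ => d, hconst d⟩, ?_⟩
  exact stmt17_phiFun_eq hfin U _ (Filter.univ_mem' (fun e => rfl))

private lemma stmt17_ker_Phi (hfin : ∀ f : R,
      (Set.range fun e : ↥E => Ideal.Quotient.mk M ((f : ↥E → D) e)).Finite)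
    (U : Ultrafilter ↥E) (Q : Ideal R)
    (hQ : ∀ f : R, f ∈ Q ↔ {e : ↥E | (f : ↥E → D) e ∈ M} ∈ U) :
    Q = RingHom.ker (stmt17_Phi hfin U) := by
  ext f
  rw [RingHom.mem_ker, hQ]
  have hset : {e : ↥E | (f : ↥E → D) e ∈ M}
      = {e : ↥E | Ideal.Quotient.mk M ((f : ↥E → D) e) = 0} := by
    ext e; simp [Ideal.Quotient.eq_zero_iff_mem]
  rw [hset]
  constructor
  · exact fun h => stmt17_phiFun_eq hfin U f h
  · intro h
    have hs := stmt17_phiFun_spec hfin U f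
    rw [show (stmt17_Phi hfin U) f = stmt17_phiFun hfin U f from rfl] at h
    rwa [h] at hs

variable (hconst : ∀ d : D, (fun _ : ↥E => d) ∈ R) (hM : M.IsMaximal)
  (hfin : ∀ f : R,
      (Set.range fun e : ↥E => Ideal.Quotient.mk M ((f : ↥E → D) e)).Finite)
  {Q : Ideal R} (hQp : Q.IsPrime)
  (hQM : ∀ f : R, (∀ e : ↥E, (f : ↥E → D) e ∈ M) → f ∈ Q)

include hconst hM hfin hQp hQM

private lemma stmt17_const_mem_Q (d : D) (h : (⟨fun _ => d, hconst d⟩ : R) ∈ Q) : d ∈ M := by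
  by_contra hd
  obtain ⟨y, i, hi, hyi⟩ := hM.exists_inv hd
  have h1 : (⟨fun _ => y, hconst y⟩ : R) * ⟨fun _ => d, hconst d⟩ ∈ Q := Q.mul_mem_left _ h
  have h2 : (⟨fun _ => i, hconst i⟩ : R) ∈ Q := hQM _ (fun _ => hi)
  have h3 : (⟨fun _ => y, hconst y⟩ : R) * ⟨fun _ => d, hconst d⟩
      + ⟨fun _ => i, hconst i⟩ = 1 := by
    ext e
    show y * d + i = 1
    exact hyi
  exact hQp.ne_top (Ideal.eq_top_iff_one Q |>.2 (h3 ▸ Q.add_mem h1 h2))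

private lemma stmt17_exists_zero (f : R) (hf : f ∈ Q) : ∃ e : ↥E, (f : ↥E → D) e ∈ M := by
  by_contra hno
  push_neg at hno
  classical
  have hlift : ∀ a : D ⧸ M, ∃ d, Ideal.Quotient.mk M d = a := Ideal.Quotient.mk_surjective
  choose d hd using hlift
  set s := (hfin f).toFinset with hs
  set P : R := ∏ a ∈ s, (f - ⟨fun _ => d a, hconst (d a)⟩) with hP
  have hPval : ∀ e : ↥E, (P : ↥E → D) e = ∏ a ∈ s, ((f : ↥E → D) e - d a) := by
    intro e
    have : (P : ↥E → D) e
        = ((Pi.evalRingHom (fun _ => D) e).comp R.subtype) P := rfl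
    rw [this, hP, map_prod]
    rfl
  have hPQ : P ∈ Q := by
    refine hQM P (fun e => ?_)
    rw [← Ideal.Quotient.eq_zero_iff_mem, hPval, map_prod]
    have hmem : Ideal.Quotient.mk M ((f : ↥E → D) e) ∈ s := by
      rw [hs, Set.Finite.mem_toFinset]
      exact Set.mem_range_self e
    refine Finset.prod_eq_zero hmem ?_
    rw [map_sub, hd, sub_self]
  haveI := hQp
  obtain ⟨a, ha, haQ⟩ := (Ideal.IsPrime.prod_mem_iff).1 (hP ▸ hPQ)
  have hdconst : (⟨fun _ => d a, hconst (d a)⟩ : R) ∈ Q := by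
    have := Q.sub_mem hf haQ
    simpa using this
  have hdM : d a ∈ M := stmt17_const_mem_Q hconst hM hfin hQp hQM _ hdconst
  rw [hs, Set.Finite.mem_toFinset] at ha
  obtain ⟨e, he⟩ := ha
  have ha0 : a = (0 : D ⧸ M) := by
    rw [← hd a, Ideal.Quotient.eq_zero_iff_mem]; exact hdM
  apply hno e
  rw [← Ideal.Quotient.eq_zero_iff_mem]
  have hfe : Ideal.Quotient.mk M ((f : ↥E → D) e) = a := he
  rw [hfe, ha0]

private lemma stmt17_exists_indicator (f : R) : ∃ u : R,
    (∀ e : ↥E, (f : ↥E → D) e ∈ M ↔ (u : ↥E → D) e ∉ M) ∧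
    (∀ e : ↥E, ((f * u : R) : ↥E → D) e ∈ M) := by
  classical
  haveI := hM.isPrime
  have hlift : ∀ a : D ⧸ M, ∃ d, Ideal.Quotient.mk M d = a := Ideal.Quotient.mk_surjective
  choose d hd using hlift
  set s := ((hfin f).toFinset).erase 0 with hs
  set u : R := ∏ a ∈ s, (f - ⟨fun _ => d a, hconst (d a)⟩) with hu
  have huval : ∀ e : ↥E, Ideal.Quotient.mk M ((u : ↥E → D) e)
      = ∏ a ∈ s, (Ideal.Quotient.mk M ((f : ↥E → D) e) - a) := by
    intro e
    have : (u : ↥E → D) e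
        = ((Pi.evalRingHom (fun _ => D) e).comp R.subtype) u := rfl
    rw [this, hu, map_prod, map_prod]
    refine Finset.prod_congr rfl (fun a _ => ?_)
    show Ideal.Quotient.mk M ((f : ↥E → D) e - d a) = _
    rw [map_sub, hd]
  have key : ∀ e : ↥E, (f : ↥E → D) e ∈ M ↔ (u : ↥E → D) e ∉ M := by
    intro e
    rw [← Ideal.Quotient.eq_zero_iff_mem (a := (f : ↥E → D) e),
      ← Ideal.Quotient.eq_zero_iff_mem (a := (u : ↥E → D) e), huval]
    constructor
    · intro h0
      refine Finset.prod_ne_zero_iff.2 (fun a ha => ?_)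
      rw [h0, zero_sub, neg_ne_zero]
      exact Finset.ne_of_mem_erase ha
    · intro hne
      by_contra h0
      apply hne
      have hmem : Ideal.Quotient.mk M ((f : ↥E → D) e) ∈ s := by
        rw [hs, Finset.mem_erase, Set.Finite.mem_toFinset]
        exact ⟨h0, Set.mem_range_self e⟩
      exact Finset.prod_eq_zero hmem (sub_self _)
  refine ⟨u, key, fun e => ?_⟩
  have : ((f * u : R) : ↥E → D) e = (f : ↥E → D) e * (u : ↥E → D) e := rfl
  rw [this]
  by_cases hfe : (f : ↥E → D) e ∈ M
  · exact M.mul_mem_right _ hfe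
  · have : (u : ↥E → D) e ∈ M := by
      by_contra hue
      exact hfe ((key e).2 hue)
    exact M.mul_mem_left _ this

private lemma stmt17_no_both (f u : R) (hf : f ∈ Q) (hu : u ∈ Q)
    (hind : ∀ e : ↥E, (f : ↥E → D) e ∈ M ↔ (u : ↥E → D) e ∉ M) : False := by
  obtain ⟨e, he⟩ := stmt17_exists_zero hconst hM hfin hQp hQM (f + u) (Q.add_mem hf hu)
  have hsum : ((f + u : R) : ↥E → D) e = (f : ↥E → D) e + (u : ↥E → D) e := rfl
  rw [hsum] at he
  by_cases hfe : (f : ↥E → D) e ∈ M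
  · have : (u : ↥E → D) e ∈ M := by
      have := M.sub_mem he hfe
      simpa using this
    exact (hind e).1 hfe this
  · have hue : (u : ↥E → D) e ∈ M := by
      by_contra hue
      exact hfe ((hind e).2 hue)
    apply hfe
    have := M.sub_mem he hue
    simpa using this

private lemma stmt17_exists_inter (f g : R) (hf : f ∈ Q) (hg : g ∈ Q) :
    ∃ h : R, h ∈ Q ∧ ∀ e : ↥E, (h : ↥E → D) e ∈ M →
      (f : ↥E → D) e ∈ M ∧ (g : ↥E → D) e ∈ M := by
  haveI hMp := hM.isPrime
  obtain ⟨uf, hif, hfu⟩ := stmt17_exists_indicator hconst hM hfin hQp hQM f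
  obtain ⟨ug, hig, hgu⟩ := stmt17_exists_indicator hconst hM hfin hQp hQM g
  set w : R := uf * ug with hwdef
  have hw : ∀ e : ↥E, (w : ↥E → D) e ∈ M ↔
      ¬((f : ↥E → D) e ∈ M ∧ (g : ↥E → D) e ∈ M) := by
    intro e
    have hwe : (w : ↥E → D) e = (uf : ↥E → D) e * (ug : ↥E → D) e := rfl
    rw [hwe]
    constructor
    · intro hmem
      rcases hMp.mem_or_mem hmem with h1 | h2
      · intro ⟨hfe, _⟩; exact (hif e).1 hfe h1
      · intro ⟨_, hge⟩; exact (hig e).1 hge h2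
    · intro hnand
      by_cases hfe : (f : ↥E → D) e ∈ M
      · have hge : (g : ↥E → D) e ∉ M := fun hge => hnand ⟨hfe, hge⟩
        have : (ug : ↥E → D) e ∈ M := by
          by_contra hc; exact hge ((hig e).2 hc)
        exact M.mul_mem_left _ this
      · have : (uf : ↥E → D) e ∈ M := by
          by_contra hc; exact hfe ((hif e).2 hc)
        exact M.mul_mem_right _ this
  obtain ⟨uw, hiw, hwu⟩ := stmt17_exists_indicator hconst hM hfin hQp hQM w
  have hwuQ : w * uw ∈ Q := hQM _ hwu
  rcases hQp.mem_or_mem hwuQ with hwQ | huwQ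
  · rcases hQp.mem_or_mem (hwdef ▸ hwQ) with h1 | h2
    · exact (stmt17_no_both hconst hM hfin hQp hQM f uf hf h1 hif).elim
    · exact (stmt17_no_both hconst hM hfin hQp hQM g ug hg h2 hig).elim
  · refine ⟨uw, huwQ, fun e he => ?_⟩
    have hwnot : (w : ↥E → D) e ∉ M := fun hw' => (hiw e).1 hw' he
    by_contra hc
    exact hwnot ((hw e).2 hc)

end StmtAux

theorem stmt17 {D : Type*} [CommRing D] [IsDomain D] {E : Set D}
    (R : Subring (↥E → D)) (hconst : ∀ d : D, (fun _ : ↥E => d) ∈ R)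
    (M : Ideal D) (hM : M.IsMaximal)
    (hfin : ∀ f : R,
      (Set.range fun e : ↥E => Ideal.Quotient.mk M ((f : ↥E → D) e)).Finite) :
    (∀ Q : Ideal R,
      (Q.IsPrime ∧ ∀ f : R, (∀ e : ↥E, (f : ↥E → D) e ∈ M) → f ∈ Q) ↔
      ∃ U : Ultrafilter ↥E, ∀ f : R, f ∈ Q ↔ {e : ↥E | (f : ↥E → D) e ∈ M} ∈ U) ∧
    ∀ Q : Ideal R,
      (∃ U : Ultrafilter ↥E, ∀ f : R, f ∈ Q ↔ {e : ↥E | (f : ↥E → D) e ∈ M} ∈ U) →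
      Q.IsMaximal ∧ Nonempty ((R ⧸ Q) ≃+* D ⧸ M) := by
  haveI := hM
  letI : Field (D ⧸ M) := Ideal.Quotient.field M
  have main : ∀ Q : Ideal R,
      (∃ U : Ultrafilter ↥E, ∀ f : R, f ∈ Q ↔ {e : ↥E | (f : ↥E → D) e ∈ M} ∈ U) →
      Q.IsMaximal ∧ Nonempty ((R ⧸ Q) ≃+* D ⧸ M) := by
    rintro Q ⟨U, hU⟩
    have hker := stmt17_ker_Phi hfin U Q hU
    have hsurj := stmt17_Phi_surjective hfin hconst U
    constructor
    · rw [hker]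
      exact RingHom.ker_isMaximal_of_surjective _ hsurj
    · rw [hker]
      exact ⟨RingHom.quotientKerEquivOfSurjective hsurj⟩
  refine ⟨fun Q => ⟨?_, ?_⟩, main⟩
  · rintro ⟨hQp, hQM⟩
    classical
    let F : Filter ↥E :=
      { sets := {S | ∃ f : R, f ∈ Q ∧ {e : ↥E | (f : ↥E → D) e ∈ M} ⊆ S}
        univ_sets := ⟨0, Q.zero_mem, Set.subset_univ _⟩
        sets_of_superset := fun ⟨f, hf, hsub⟩ hST => ⟨f, hf, hsub.trans hST⟩
        inter_sets := by
          rintro S T ⟨f, hf, hfS⟩ ⟨g, hg, hgT⟩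
          obtain ⟨h, hh, hhfg⟩ := stmt17_exists_inter hconst hM hfin hQp hQM f g hf hg
          exact ⟨h, hh, fun e he => ⟨hfS (hhfg e he).1, hgT (hhfg e he).2⟩⟩ }
    haveI hFne : F.NeBot := by
      rw [← Filter.forall_mem_nonempty_iff_neBot]
      rintro S ⟨f, hf, hsub⟩
      obtain ⟨e, he⟩ := stmt17_exists_zero hconst hM hfin hQp hQM f hf
      exact ⟨e, hsub he⟩
    obtain ⟨U, hUF⟩ := Ultrafilter.exists_le F
    refine ⟨U, fun f => ⟨fun hf => ?_, fun hZ => ?_⟩⟩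
    · exact hUF (show _ ∈ F from ⟨f, hf, subset_rfl⟩)
    · obtain ⟨u, hind, hmul⟩ := stmt17_exists_indicator hconst hM hfin hQp hQM f
      rcases hQp.mem_or_mem (hQM _ hmul) with h | h
      · exact h
      · exfalso
        have hZu : {e : ↥E | (u : ↥E → D) e ∈ M} ∈ U :=
          hUF (show _ ∈ F from ⟨u, h, subset_rfl⟩)
        obtain ⟨e, he1, he2⟩ :=
          Ultrafilter.nonempty_of_mem (U.toFilter.inter_mem hZ hZu)
        exact (hind e).1 he1 he2
  · intro hex
    obtain ⟨hmax, -⟩ := main Q hex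
    obtain ⟨U, hU⟩ := hex
    refine ⟨hmax.isPrime, fun f hf => ?_⟩
    exact (hU f).2 (Filter.univ_mem' hf)
end

section
/- Let R be a domain and P a finitely generated prime ideal of R that is a minimal prime over a nonzero principal ideal (p). Then there exist m ∈ ℕ and s ∈ R \ P such that s·P^m ⊆ pR. -/
theorem stmt18 {R : Type*} [CommRing R] [IsDomain R] (p : R) (hp : p ≠ 0)
    (P : Ideal R) (hfg : P.FG) (hprime : P.IsPrime)
    (hmin : P ∈ (Ideal.span {p}).minimalPrimes) :
    ∃ (m : ℕ) (s : R), s ∉ P ∧ ∀ x ∈ P ^ m, s * x ∈ Ideal.span {p} := by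
  classical
  set S := Localization.AtPrime P
  set f := algebraMap R S
  have hspanP : Ideal.span {p} ≤ P := hmin.1.2
  -- maximal ideal of S is ≤ radical of pS
  have h1 : IsLocalRing.maximalIdeal S ≤
      (Ideal.map f (Ideal.span {p})).radical := by
    rw [Ideal.radical_eq_sInf]
    refine le_sInf ?_
    rintro J ⟨hJle, hJprime⟩
    have hJne : J ≠ ⊤ := hJprime.ne_top
    have hJmax : J ≤ IsLocalRing.maximalIdeal S := IsLocalRing.le_maximalIdeal hJne
    set Q := J.comap f with hQ
    have hQprime : Q.IsPrime := Ideal.IsPrime.comap f (hK := hJprime)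
    have hQleP : Q ≤ P := by
      calc Q ≤ (IsLocalRing.maximalIdeal S).comap f := Ideal.comap_mono hJmax
        _ = P := IsLocalization.AtPrime.comap_maximalIdeal _ _
    have hpQ : Ideal.span {p} ≤ Q := by
      rw [hQ, ← Ideal.map_le_iff_le_comap]
      exact hJle
    have hQP : Q = P := le_antisymm hQleP (hmin.2 ⟨hQprime, hpQ⟩ hQleP)
    calc IsLocalRing.maximalIdeal S = Ideal.map f P :=
          (Localization.AtPrime.map_eq_maximalIdeal).symm
      _ = Ideal.map f Q := by rw [hQP]
      _ ≤ J := Ideal.map_comap_le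
  have hfgmax : (IsLocalRing.maximalIdeal S).FG := by
    rw [← Localization.AtPrime.map_eq_maximalIdeal]
    exact Ideal.FG.map hfg f
  obtain ⟨m, hm⟩ := Ideal.exists_pow_le_of_le_radical_of_fg h1 hfgmax
  -- clearing denominators
  have hinj : Function.Injective f :=
    IsLocalization.injective S P.primeCompl_le_nonZeroDivisors
  have key : ∀ x ∈ P ^ m, ∃ t, t ∉ P ∧ t * x ∈ Ideal.span {p} := by
    intro x hx
    have hfx : f x ∈ Ideal.map f (Ideal.span {p}) := by
      apply hm
      rw [← Localization.AtPrime.map_eq_maximalIdeal, ← Ideal.map_pow]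
      exact Ideal.mem_map_of_mem f hx
    rw [IsLocalization.mem_map_algebraMap_iff P.primeCompl S] at hfx
    obtain ⟨⟨⟨a, ha⟩, ⟨t, ht⟩⟩, hat⟩ := hfx
    refine ⟨t, ht, ?_⟩
    have : f (t * x) = f a := by
      simpa [map_mul, mul_comm] using hat
    rwa [hinj this]
  -- combine over a finite generating set of P ^ m
  have main : ∀ T : Finset R, (↑T : Set R) ⊆ (P ^ m : Ideal R) →
      ∃ s, s ∉ P ∧ ∀ x ∈ Ideal.span (↑T : Set R), s * x ∈ Ideal.span {p} := by
    intro T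
    induction T using Finset.induction_on with
    | empty =>
      intro _
      refine ⟨1, ?_, ?_⟩
      · simpa using hprime.ne_top ∘ (Ideal.eq_top_iff_one P).2
      · intro x hx
        simp only [Finset.coe_empty, Ideal.span_empty, Ideal.mem_bot] at hx
        simp [hx]
    | @insert a T hnotmem ih =>
      intro hsub
      rw [Finset.coe_insert] at hsub ⊢
      obtain ⟨s, hs, hsT⟩ := ih (Set.Subset.trans (Set.subset_insert _ _) hsub)
      obtain ⟨t, ht, hta⟩ := key a (hsub (Set.mem_insert a _))
      refine ⟨s * t, fun h => (hprime.mem_or_mem h).elim hs ht, ?_⟩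
      intro x hx
      rw [Ideal.span_insert] at hx
      obtain ⟨y, hy, z, hz, rfl⟩ := Submodule.mem_sup.mp hx
      obtain ⟨r, rfl⟩ := Ideal.mem_span_singleton'.mp hy
      have h1 : s * t * (r * a) ∈ Ideal.span {p} := by
        have : s * t * (r * a) = (s * r) * (t * a) := by ring
        rw [this]
        exact Ideal.mul_mem_left _ _ hta
      have h2 : s * t * z ∈ Ideal.span {p} := by
        have : s * t * z = t * (s * z) := by ring
        rw [this]
        exact Ideal.mul_mem_left _ _ (hsT z hz)
      simpa [mul_add] using Ideal.add_mem _ h1 h2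
  obtain ⟨T, hT⟩ := Submodule.FG.pow hfg m
  obtain ⟨s, hs, hsT⟩ := main T (by rw [← hT]; exact Ideal.subset_span)
  exact ⟨m, s, hs, fun x hx => hsT x (show x ∈ Submodule.span R (↑T : Set R) by rw [hT]; exact hx)⟩
end

section
/- Let D be a domain and P a finitely generated prime ideal of D that is a minimal prime over a nonzero principal ideal. Let R ⊆ D^E be a divisible ring of functions from E to D. Then every prime ideal Q of R with Q ∩ D = P (intersection taken with the constant functions) contains R(E,P) = {f ∈ R : f(E) ⊆ P}. -/
/-!
Localizing at `P`, the maximal ideal `P D_P` is finitely generated and is the radical of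
`p D_P`, so some power of it lies in `p D_P`; clearing denominators, there are `n` and
`s ∉ P` with `s P^n ⊆ (p)`. For `f ∈ R` with values in `P`, the function `s f^n` then has all
its values in `(p)`, so by divisibility it is `p` times an element of `R` and lies in `Q`.
As the constant `s` is not in `Q`, primality gives `f ∈ Q`.
-/

namespace Ideal

variable {R : Type*} [CommRing R]

theorem exists_notMem_forall_mul_mem_of_fg {P J K : Ideal R} (hP : P.IsPrime) (hJ : J.FG)
    (h : ∀ x ∈ J, ∃ s ∉ P, s * x ∈ K) : ∃ s ∉ P, ∀ x ∈ J, s * x ∈ K := by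
  obtain ⟨T, rfl⟩ := hJ
  suffices ¬ K.colon (span (T : Set R)) ≤ P by
    obtain ⟨s, hs, hsP⟩ := SetLike.not_le_iff_exists.mp this
    exact ⟨s, hsP, fun x hx => Submodule.mem_colon.mp hs x hx⟩
  have hcolon : K.colon (span (T : Set R)) = T.inf fun t => K.colon {t} := by
    rw [colon_span, ← Set.biUnion_of_singleton (T : Set R), Submodule.colon_iUnion,
      Finset.inf_eq_iInf]
    simp only [Submodule.colon_iUnion, Finset.mem_coe]
  rw [hcolon, hP.inf_le']
  rintro ⟨t, ht, hle⟩
  obtain ⟨s, hsP, hst⟩ := h t (subset_span ht)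
  exact hsP (hle (Submodule.mem_colon_singleton.mpr hst))

theorem exists_mul_pow_mem_of_mem_minimalPrimes {I P : Ideal R} (hP : P ∈ I.minimalPrimes)
    (hfg : P.FG) : ∃ n, ∃ s ∉ P, ∀ x ∈ P ^ n, s * x ∈ I := by
  have hPprime : P.IsPrime := hP.1.1
  let φ := algebraMap R (Localization.AtPrime P)
  have hrad : (I.map φ).radical = P.map φ :=
    IsLocalization.AtPrime.radical_map_of_mem_minimalPrimes _ P I hP
  obtain ⟨n, hn⟩ := exists_pow_le_of_le_radical_of_fg hrad.ge (hfg.map φ)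
  refine ⟨n, exists_notMem_forall_mul_mem_of_fg hPprime hfg.pow ?_⟩
  intro x hx
  have hxI : IsLocalization.mk' _ x (1 : P.primeCompl) ∈ I.map φ := by
    rw [IsLocalization.mk'_one]
    refine hn ?_
    rw [← Ideal.map_pow]
    exact mem_map_of_mem φ hx
  exact (IsLocalization.mk'_mem_map_algebraMap_iff P.primeCompl _ I x 1).mp hxI

end Ideal

def Subring.IsDivisible {X D : Type*} [CommRing D] (R : Subring (X → D)) : Prop :=
  ∀ f ∈ R, ∀ c : D, c ≠ 0 → (∀ x, f x ∈ Ideal.span {c}) →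
    ∀ g : X → D, (∀ x, c * g x = f x) → g ∈ R

theorem Subring.IsDivisible.mem_of_forall_mem_span_singleton {X D : Type*} [CommRing D]
    {R : Subring (X → D)} (hR : R.IsDivisible) {Q : Ideal R} {c : R} {p : D} (hp : p ≠ 0)
    (hc : ∀ x, (c : X → D) x = p) (hcQ : c ∈ Q) {f : R}
    (hf : ∀ x, (f : X → D) x ∈ Ideal.span {p}) : f ∈ Q := by
  choose g hg using fun x => Ideal.mem_span_singleton.mp (hf x)
  have hgR : g ∈ R := hR f f.2 p hp hf g fun x => (hg x).symm
  have hfg : f = c * ⟨g, hgR⟩ := Subtype.ext <| funext fun x => by simp [hg x, hc x]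
  rw [hfg]
  exact Q.mul_mem_right _ hcQ

theorem stmt19_general {D : Type*} [CommRing D] {E : Set D}
    (R : Subring (↥E → D)) (hconst : ∀ d : D, (fun _ : ↥E => d) ∈ R)
    (hdiv : ∀ f ∈ R, ∀ c : D, c ≠ 0 → (∀ e : ↥E, f e ∈ Ideal.span {c}) →
      ∀ g : ↥E → D, (∀ e : ↥E, c * g e = f e) → g ∈ R)
    (P : Ideal D) (hfg : P.FG)
    (hmin : ∃ p : D, p ≠ 0 ∧ P ∈ (Ideal.span {p}).minimalPrimes)
    (Q : Ideal R) (hQ : Q.IsPrime)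
    (hQP : ∀ d : D, (⟨fun _ : ↥E => d, hconst d⟩ : R) ∈ Q ↔ d ∈ P) :
    ∀ f : R, (∀ e : ↥E, (f : ↥E → D) e ∈ P) → f ∈ Q := by
  obtain ⟨p, hp, hP⟩ := hmin
  obtain ⟨n, s, hsP, hs⟩ := Ideal.exists_mul_pow_mem_of_mem_minimalPrimes hP hfg
  let const (d : D) : R := ⟨fun _ => d, hconst d⟩
  have hpQ : const p ∈ Q := (hQP p).mpr (hP.1.2 (Ideal.mem_span_singleton_self p))
  intro f hf
  have hsf : const s * f ^ n ∈ Q :=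
    Subring.IsDivisible.mem_of_forall_mem_span_singleton hdiv hp (fun _ => rfl) hpQ fun e => by
      simpa [const] using hs _ (Ideal.pow_mem_pow (hf e) n)
  have hfn : f ^ n ∈ Q := (hQ.mem_or_mem hsf).resolve_left fun h => hsP ((hQP s).mp h)
  exact hQ.mem_of_pow_mem n hfn

theorem stmt19 {D : Type*} [CommRing D] [IsDomain D] {E : Set D}
    (R : Subring (↥E → D)) (hconst : ∀ d : D, (fun _ : ↥E => d) ∈ R)
    (hdiv : ∀ f ∈ R, ∀ c : D, c ≠ 0 → (∀ e : ↥E, f e ∈ Ideal.span {c}) →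
      ∀ g : ↥E → D, (∀ e : ↥E, c * g e = f e) → g ∈ R)
    (P : Ideal D) (hfg : P.FG) (hprime : P.IsPrime)
    (hmin : ∃ p : D, p ≠ 0 ∧ P ∈ (Ideal.span {p}).minimalPrimes)
    (Q : Ideal R) (hQ : Q.IsPrime)
    (hQP : ∀ d : D, (⟨fun _ : ↥E => d, hconst d⟩ : R) ∈ Q ↔ d ∈ P) :
    ∀ f : R, (∀ e : ↥E, (f : ↥E → D) e ∈ P) → f ∈ Q :=
  stmt19_general R hconst hdiv P hfg hmin Q hQ hQP
end
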